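/- In R₂, every monomial v in s, t of length at least 3 has one of the block forms [[0, v₁₂],[0, v₂₂]] or [[v₁₁, 0],[v₂₁, 0]], where each nonzero block entry v_{ij} is itself a monomial in s, t of length strictly less than the length of v (contraction property). -/

import Mathlib

/-!
The tree-indexed vector space `V` over `ℚ` with basis the free monoid on two letters
(encoded as `List Bool`, with `false` the letter `0` and `true` the letter `1`).
The recursive matrices `s = [[0,0],[1,0]]` and `t = [[0,t],[0,s]]` of the ring `R₂`
act on the decomposition `V = ℚ·φ ⊕ 0V ⊕ 1V` by the block-matrix recursion.
-/

noncomputable section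

abbrev V : Type := List Bool →₀ ℚ

/-- Prefixing by a letter: the embedding `V → yV`. -/
def pre (b : Bool) : V →ₗ[ℚ] V := Finsupp.lmapDomain ℚ ℚ (List.cons b)

/-- Value of `s = [[0,0],[1,0]]` on a basis word. -/
def Sfun : List Bool → V
  | [] => 0
  | false :: u => Finsupp.single (true :: u) 1
  | true :: _ => 0

/-- Value of `t = [[0,t],[0,s]]` on a basis word, by recursion. -/
def Tfun : List Bool → V
  | [] => 0
  | false :: _ => 0
  | true :: u => pre false (Tfun u) + pre true (Sfun u)

/-- The generator `s` of `R₂`. -/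
def sR : Module.End ℚ V := Finsupp.linearCombination ℚ Sfun

/-- The generator `t` of `R₂`. -/
def tR : Module.End ℚ V := Finsupp.linearCombination ℚ Tfun

/-- The level-preserving operator with block form `[[e,0,0],[0,A,B],[0,C,D]]` on
`V = ℚ·φ ⊕ 0V ⊕ 1V`, written `e ⊕ [[A,B],[C,D]]`. -/
def blk (e : ℚ) (A B C D : Module.End ℚ V) : Module.End ℚ V :=
  Finsupp.linearCombination ℚ (fun w => match w with
    | [] => Finsupp.single ([] : List Bool) e
    | false :: u => pre false (A (Finsupp.single u 1)) + pre true (C (Finsupp.single u 1))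
    | true :: u => pre false (B (Finsupp.single u 1)) + pre true (D (Finsupp.single u 1)))

/-- The monomial in `s, t` given by a word (`false ↦ s`, `true ↦ t`). -/
def mono (w : List Bool) : Module.End ℚ V :=
  (w.map (fun b => if b then tR else sR)).prod

/-- The ring `R₂` generated by `s` and `t` (a non-unital subring of `End ℚ V`). -/
def R2 : NonUnitalSubring (Module.End ℚ V) := NonUnitalSubring.closure {sR, tR}

end

noncomputable section

/-- A block entry of a monomial of length `< n`: either zero or a monomial of
strictly smaller length. -/
def ShortEntry (n : ℕ) (x : Module.End ℚ V) : Prop :=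
  x = 0 ∨ ∃ u : List Bool, u ≠ [] ∧ u.length < n ∧ x = mono u

/-!
On `V = ℚ·φ ⊕ 0V ⊕ 1V` the operators `blk 0 A B C D` multiply like `2 × 2` block matrices, and
`s = [[0,0],[1,0]]`, `t = [[0,t],[0,s]]`. So `s · [[A,B],[C,D]] = [[0,0],[A,B]]` and
`t · [[A,B],[C,D]] = [[tC,tD],[sC,sD]]`: prepending a letter never creates a nonzero column, and
the only entries that grow are those computed from the bottom row. Starting from the four monomials
of length two (where `s² = 0` is needed for `tt`), a monomial of length `n ≥ 2` has a zero column,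
bottom entries of length `< n` and top entries of length `< n + 1`; one more letter brings the top
row below `n` as well.
-/

section BlockCalculus

open Finsupp

@[simp] lemma pre_single (b : Bool) (u : List Bool) (c : ℚ) :
    pre b (single u c) = single (b :: u) c := by
  simp [pre]

variable (e : ℚ) (A B C D : Module.End ℚ V)

@[simp] lemma blk_single_nil (c : ℚ) : blk e A B C D (single [] c) = single [] (c * e) := by
  simp [blk]

@[simp] lemma blk_single_false (u : List Bool) :
    blk e A B C D (single (false :: u) 1) =
      pre false (A (single u 1)) + pre true (C (single u 1)) := by
  simp [blk]

@[simp] lemma blk_single_true (u : List Bool) :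
    blk e A B C D (single (true :: u) 1) =
      pre false (B (single u 1)) + pre true (D (single u 1)) := by
  simp [blk]

lemma blk_comp_pre_false : blk e A B C D ∘ₗ pre false = pre false ∘ₗ A + pre true ∘ₗ C := by
  ext u : 2
  simp

lemma blk_comp_pre_true : blk e A B C D ∘ₗ pre true = pre false ∘ₗ B + pre true ∘ₗ D := by
  ext u : 2
  simp

@[simp] lemma blk_pre_false (x : V) :
    blk e A B C D (pre false x) = pre false (A x) + pre true (C x) :=
  LinearMap.congr_fun (blk_comp_pre_false e A B C D) x

@[simp] lemma blk_pre_true (x : V) :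
    blk e A B C D (pre true x) = pre false (B x) + pre true (D x) :=
  LinearMap.congr_fun (blk_comp_pre_true e A B C D) x

lemma blk_mul_blk (e' : ℚ) (A' B' C' D' : Module.End ℚ V) :
    blk e A B C D * blk e' A' B' C' D' =
      blk (e * e') (A * A' + B * C') (A * B' + B * D') (C * A' + D * C') (C * B' + D * D') := by
  ext (_ | ⟨_ | _, u⟩) : 2 <;> simp [mul_comm, add_add_add_comm]

lemma blk_zero : blk 0 0 0 0 0 = 0 := by
  ext (_ | ⟨_ | _, u⟩) : 2 <;> simp

lemma sR_eq_blk : sR = blk 0 0 0 1 0 := by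
  ext (_ | ⟨_ | _, u⟩) : 2 <;> simp [sR, Sfun]

lemma tR_eq_blk : tR = blk 0 0 tR 0 sR := by
  ext (_ | ⟨_ | _, u⟩) : 2 <;> simp [sR, tR, Tfun]

end BlockCalculus

section Monomials

variable (A B C D : Module.End ℚ V)

lemma sR_mul_blk : sR * blk 0 A B C D = blk 0 0 0 A B := by
  rw [sR_eq_blk, blk_mul_blk]
  simp

lemma tR_mul_blk : tR * blk 0 A B C D = blk 0 (tR * C) (tR * D) (sR * C) (sR * D) := by
  conv_lhs => rw [tR_eq_blk]
  rw [blk_mul_blk]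
  simp

lemma sR_mul_sR : sR * sR = 0 := by
  nth_rewrite 2 [sR_eq_blk]
  rw [sR_mul_blk, blk_zero]

lemma mono_cons_false (w : List Bool) : mono (false :: w) = sR * mono w := by
  simp [mono]

lemma mono_cons_true (w : List Bool) : mono (true :: w) = tR * mono w := by
  simp [mono]

end Monomials

namespace ShortEntry

variable {n m : ℕ} {x : Module.End ℚ V}

lemma zero (n : ℕ) : ShortEntry n 0 := Or.inl rfl

lemma of_mono {u : List Bool} (hu : u ≠ []) (hlen : u.length < n) : ShortEntry n (mono u) :=
  Or.inr ⟨u, hu, hlen, rfl⟩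

lemma of_le (h : ShortEntry n x) (hnm : n ≤ m) : ShortEntry m x := by
  rcases h with rfl | ⟨u, hu, hlen, rfl⟩
  · exact zero m
  · exact of_mono hu (by omega)

lemma sR_mul (h : ShortEntry n x) : ShortEntry (n + 1) (sR * x) := by
  rcases h with rfl | ⟨u, -, hlen, rfl⟩
  · simpa using zero (n + 1)
  · simpa [mono_cons_false] using of_mono (u := false :: u) (by simp) (by simpa using hlen)

lemma tR_mul (h : ShortEntry n x) : ShortEntry (n + 1) (tR * x) := by
  rcases h with rfl | ⟨u, -, hlen, rfl⟩
  · simpa using zero (n + 1)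
  · simpa [mono_cons_true] using of_mono (u := true :: u) (by simp) (by simpa using hlen)

end ShortEntry

def ShortBlockForm (top bot : ℕ) (M : Module.End ℚ V) : Prop :=
  ∃ A B C D, M = blk 0 A B C D ∧ (A = 0 ∧ C = 0 ∨ B = 0 ∧ D = 0) ∧
    ShortEntry top A ∧ ShortEntry top B ∧ ShortEntry bot C ∧ ShortEntry bot D

namespace ShortBlockForm

variable {top bot : ℕ} {M : Module.End ℚ V}

lemma of_le {top' bot' : ℕ} (h : ShortBlockForm top bot M) (htop : top ≤ top')
    (hbot : bot ≤ bot') : ShortBlockForm top' bot' M := by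
  obtain ⟨A, B, C, D, rfl, hcol, hA, hB, hC, hD⟩ := h
  exact ⟨A, B, C, D, rfl, hcol, hA.of_le htop, hB.of_le htop, hC.of_le hbot, hD.of_le hbot⟩

lemma sR_mul (h : ShortBlockForm top bot M) (top' : ℕ) : ShortBlockForm top' top (sR * M) := by
  obtain ⟨A, B, C, D, rfl, hcol, hA, hB, -, -⟩ := h
  refine ⟨0, 0, A, B, sR_mul_blk A B C D, ?_, .zero _, .zero _, hA, hB⟩
  exact hcol.imp (fun h => ⟨rfl, h.1⟩) (fun h => ⟨rfl, h.1⟩)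

lemma tR_mul (h : ShortBlockForm top bot M) : ShortBlockForm (bot + 1) (bot + 1) (tR * M) := by
  obtain ⟨A, B, C, D, rfl, hcol, -, -, hC, hD⟩ := h
  refine ⟨_, _, _, _, tR_mul_blk A B C D, ?_, hC.tR_mul, hD.tR_mul, hC.sR_mul, hD.sR_mul⟩
  exact hcol.imp (fun h => by simp [h.2]) (fun h => by simp [h.2])

end ShortBlockForm

lemma shortBlockForm_mono_of_length_eq_two {w : List Bool} (hw : w.length = 2) :
    ShortBlockForm 3 2 (mono w) := by
  obtain ⟨b, b', rfl⟩ := List.length_eq_two.mp hw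
  have hs : mono [false] = blk 0 0 0 1 0 := by simp [mono, sR_eq_blk]
  have ht : mono [true] = blk 0 0 tR 0 sR := by simp [mono, ← tR_eq_blk]
  have hS : ShortEntry 2 sR := by
    simpa [mono] using ShortEntry.of_mono (u := [false]) (by simp) (by simp)
  have hT : ShortEntry 2 tR := by
    simpa [mono] using ShortEntry.of_mono (u := [true]) (by simp) (by simp)
  cases b <;> cases b'
  · refine ⟨0, 0, 0, 0, ?_, .inl ⟨rfl, rfl⟩, .zero _, .zero _, .zero _, .zero _⟩
    rw [mono_cons_false, hs, sR_mul_blk]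
  · refine ⟨0, 0, 0, tR, ?_, .inl ⟨rfl, rfl⟩, .zero _, .zero _, .zero _, hT⟩
    rw [mono_cons_false, ht, sR_mul_blk]
  · refine ⟨tR, 0, sR, 0, ?_, .inr ⟨rfl, rfl⟩, hT.of_le (by simp), .zero _, hS, .zero _⟩
    rw [mono_cons_true, hs, tR_mul_blk]
    simp
  · refine ⟨0, tR * sR, 0, 0, ?_, .inl ⟨rfl, rfl⟩, .zero _, hS.tR_mul, .zero _, .zero _⟩
    rw [mono_cons_true, ht, tR_mul_blk]
    simp [sR_mul_sR]

lemma shortBlockForm_mono {w : List Bool} (hw : 2 ≤ w.length) :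
    ShortBlockForm (w.length + 1) w.length (mono w) := by
  induction w with
  | nil => simp at hw
  | cons b w ih =>
    rcases (show w.length = 1 ∨ 2 ≤ w.length by simp at hw; omega) with hw1 | hw2
    · have hlen : (b :: w).length = 2 := by simp [hw1]
      rw [hlen]
      exact shortBlockForm_mono_of_length_eq_two hlen
    · cases b
      · simpa [mono_cons_false] using (ih hw2).sR_mul _
      · simpa [mono_cons_true] using (ih hw2).tR_mul.of_le (by simp) le_rfl

lemma shortBlockForm_mono_of_three_le {w : List Bool} (hw : 3 ≤ w.length) :
    ShortBlockForm w.length w.length (mono w) := by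
  obtain ⟨_ | _, w, rfl⟩ := List.exists_cons_of_length_pos (show 0 < w.length by omega)
  · simpa [mono_cons_false] using (shortBlockForm_mono (w := w) (by simp at hw; omega)).sR_mul _
  · simpa [mono_cons_true] using (shortBlockForm_mono (w := w) (by simp at hw; omega)).tR_mul

/-- Contraction property: every monomial `v` in `s, t` of length at least `3` has one
of the block forms `[[0,v₁₂],[0,v₂₂]]` or `[[v₁₁,0],[v₂₁,0]]`, where each nonzero block
entry is itself a monomial of length strictly less than the length of `v`. -/
theorem contraction_property (w : List Bool) (hw : 3 ≤ w.length) :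
    (∃ v12 v22, ShortEntry w.length v12 ∧ ShortEntry w.length v22 ∧
        mono w = blk 0 0 v12 0 v22) ∨
    (∃ v11 v21, ShortEntry w.length v11 ∧ ShortEntry w.length v21 ∧
        mono w = blk 0 v11 0 v21 0) := by
  obtain ⟨A, B, C, D, hw, hcol, hA, hB, hC, hD⟩ := shortBlockForm_mono_of_three_le hw
  rcases hcol with ⟨rfl, rfl⟩ | ⟨rfl, rfl⟩
  · exact Or.inl ⟨B, D, hB, hD, hw⟩
  · exact Or.inr ⟨A, C, hA, hC, hw⟩

end
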